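/- arXiv:2101.09897 — 8 statements merged into one kernel-verified Lean document; each statement's English description precedes it below -/
import Mathlib

section
/- For a positive integer k, if both 48k − 60k/(k+1) and 36(32k² − 123k + 315) − 2520(10k + 9)/((k+1)(k+2)) are integers, then k ∈ {1, 2, 3, 4, 5, 9, 19}. -/
theorem stmt_9 (k : ℕ) (hk : 1 ≤ k)
    (h1 : ∃ m : ℤ, (48 * k - 60 * k / (k + 1) : ℚ) = m)
    (h2 : ∃ m : ℤ, (36 * (32 * k^2 - 123 * k + 315)
        - 2520 * (10 * k + 9) / ((k + 1) * (k + 2)) : ℚ) = m) :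
    k ∈ ({1, 2, 3, 4, 5, 9, 19} : Finset ℕ) := by
  obtain ⟨m, hm⟩ := h1
  obtain ⟨n, hn⟩ := h2
  have hne1 : ((k : ℚ) + 1) ≠ 0 := by positivity
  have hne2 : ((k : ℚ) + 2) ≠ 0 := by positivity
  field_simp at hm hn
  have d1 : ((k : ℤ) + 1) ∣ 60 * k := by
    refine ⟨48 * k - m, ?_⟩
    have : (60 * k : ℚ) = ((k : ℚ) + 1) * (48 * k - m) := by ring_nf; ring_nf at hm; linarith
    exact_mod_cast this
  have d2 : (((k : ℤ) + 1) * ((k : ℤ) + 2)) ∣ 2520 * (10 * k + 9) := by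
    refine ⟨36 * (32 * k^2 - 123 * k + 315) - n, ?_⟩
    have : (2520 * (10 * (k:ℚ) + 9)) =
        (((k : ℚ) + 1) * ((k : ℚ) + 2)) * (36 * (32 * (k:ℚ)^2 - 123 * k + 315) - n) := by
      ring_nf; ring_nf at hn; linarith
    exact_mod_cast this
  have d1' : ((k : ℤ) + 1) ∣ 60 := by
    have h := dvd_sub (⟨60, by ring⟩ : ((k : ℤ) + 1) ∣ 60 * (k + 1)) d1
    rwa [show (60 * ((k:ℤ) + 1) - 60 * k) = 60 by ring] at h
  have hd1 : (k + 1) ∣ 60 := by exact_mod_cast d1'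
  have hd2 : (k + 1) * (k + 2) ∣ 2520 * (10 * k + 9) := by exact_mod_cast d2
  have hle : k ≤ 59 := by
    have := Nat.le_of_dvd (by norm_num) hd1
    omega
  interval_cases k <;> revert hd1 hd2 <;> decide
end

section
/- For a positive integer k, the rational number k·(6 + 18(2k − 1)/(2k+1)²) is an integer if and only if k = 1. -/
theorem stmt_13 (k : ℕ) (hk : 1 ≤ k) :
    (∃ m : ℤ, (k * (6 + 18 * (2 * k - 1) / (2 * k + 1)^2) : ℚ) = m) ↔ k = 1 := by
  constructor
  · rintro ⟨m, hm⟩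
    have hne : ((2 * k + 1 : ℚ))^2 ≠ 0 := by positivity
    have key : ((18 * k * (2 * k - 1) + 6 * k * (2 * k + 1)^2 : ℤ) : ℚ)
        = ((m * (2 * k + 1)^2 : ℤ) : ℚ) := by
      push_cast
      field_simp at hm
      linarith
    have keyZ : (18 * (k : ℤ) * (2 * k - 1) + 6 * k * (2 * k + 1)^2 : ℤ)
        = m * (2 * k + 1)^2 := by exact_mod_cast key
    have hdvd : ((2 * (k : ℤ) + 1))^2 ∣ 18 * ((k : ℤ) * (2 * k - 1)) :=
      ⟨m - 6 * k, by linarith [keyZ]⟩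
    have hc1 : IsCoprime (2 * (k : ℤ) + 1) (k : ℤ) := ⟨1, -2, by ring⟩
    have hc2 : IsCoprime (2 * (k : ℤ) + 1) (2 * (k : ℤ) - 1) :=
      ⟨-((k : ℤ) - 1), (k : ℤ), by ring⟩
    have hc : IsCoprime ((2 * (k : ℤ) + 1)^2) ((k : ℤ) * (2 * k - 1)) :=
      ((hc1.mul_right hc2)).pow_left
    have h18 : ((2 * (k : ℤ) + 1))^2 ∣ 18 := hc.dvd_of_dvd_mul_right hdvd
    have hle : ((2 * (k : ℤ) + 1))^2 ≤ 18 := Int.le_of_dvd (by norm_num) h18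
    have hk' : (1 : ℤ) ≤ k := by exact_mod_cast hk
    nlinarith [hle, hk']
  · rintro rfl
    exact ⟨8, by norm_num⟩
end

section
/- For a positive integer k, the rational number 6k + 21 − 9(6k + 5)/(2k+1)² is an integer if and only if k = 1. -/
/-!
The expression is an integer exactly when `(2k+1)² ∣ 9(6k+5)`. Since `9(6k+5) = 27(2k+1) + 18`,
this forces `2k+1 ∣ 18`, leaving only `k ∈ {0, 1, 4}`, and of these `k = 4` fails.
-/

theorem Int.exists_intCast_eq_sub_div_iff_dvd {a b d : ℤ} (hd : d ≠ 0) :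
    (∃ m : ℤ, (a - b / d : ℚ) = m) ↔ d ∣ b := by
  have hd' : (d : ℚ) ≠ 0 := Int.cast_ne_zero.mpr hd
  constructor
  · rintro ⟨m, hm⟩
    refine ⟨a - m, Int.cast_injective (α := ℚ) ?_⟩
    push_cast
    field_simp at hm
    linarith
  · rintro ⟨c, rfl⟩
    exact ⟨a - c, by push_cast; field_simp⟩

theorem Nat.sq_two_mul_add_one_dvd_iff (k : ℕ) :
    (2 * k + 1) ^ 2 ∣ 9 * (6 * k + 5) ↔ k = 0 ∨ k = 1 := by
  constructor
  · intro h
    have h18 : 2 * k + 1 ∣ 18 := by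
      have h' : 2 * k + 1 ∣ 27 * (2 * k + 1) + 18 := by
        rw [show 27 * (2 * k + 1) + 18 = 9 * (6 * k + 5) by ring]
        exact (dvd_pow_self _ two_ne_zero).trans h
      exact (Nat.dvd_add_right (dvd_mul_left _ _)).mp h'
    have hk8 : k ≤ 8 := by have := Nat.le_of_dvd (by norm_num) h18; omega
    interval_cases k <;> simp_all
  · rintro (rfl | rfl) <;> norm_num

theorem stmt_14 (k : ℕ) (hk : 1 ≤ k) :
    (∃ m : ℤ, (6 * k + 21 - 9 * (6 * k + 5) / (2 * k + 1)^2 : ℚ) = m) ↔ k = 1 := by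
  have hd : ((2 * k + 1) ^ 2 : ℤ) ≠ 0 := by positivity
  have integral_iff_dvd := Int.exists_intCast_eq_sub_div_iff_dvd (a := 6 * k + 21) (b := 9 * (6 * k + 5)) hd
  push_cast at integral_iff_dvd
  have hcast : ((2 * k + 1) ^ 2 : ℤ) ∣ 9 * (6 * k + 5) ↔ (2 * k + 1) ^ 2 ∣ 9 * (6 * k + 5) := by
    exact_mod_cast Int.natCast_dvd_natCast
  rw [integral_iff_dvd, hcast, Nat.sq_two_mul_add_one_dvd_iff]
  omega
end

section
/- For every positive integer k, the rational number 6(k + 3) − 3(3k + 2)(3k + 4)/(2(k+1)³) is not an integer. -/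
theorem stmt_15 (k : ℕ) (hk : 1 ≤ k) :
    ¬ ∃ m : ℤ, (6 * (k + 3) - 3 * (3 * k + 2) * (3 * k + 4) / (2 * (k + 1)^3) : ℚ) = m := by
  rintro ⟨m, hm⟩
  have hD : ((2 * ((k:ℚ) + 1)^3)) ≠ 0 := by positivity
  have key : (3 * (3 * (k:ℤ) + 2) * (3 * (k:ℤ) + 4))
      = (6 * ((k:ℤ) + 3) - m) * (2 * ((k:ℤ) + 1)^3) := by
    have h : (3 * (3 * (k:ℚ) + 2) * (3 * (k:ℚ) + 4))
        = (6 * ((k:ℚ) + 3) - m) * (2 * ((k:ℚ) + 1)^3) := by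
      field_simp at hm
      linarith [hm]
    exact_mod_cast h
  have h1 : ((k:ℤ) + 1) ∣ 3 :=
    ⟨27 * ((k:ℤ)+1) - (6 * ((k:ℤ) + 3) - m) * (2 * ((k:ℤ)+1)^2), by linear_combination -key⟩
  have h2 : (k:ℤ) + 1 ≤ 3 := Int.le_of_dvd (by norm_num) h1
  have hk2 : k ≤ 2 := by exact_mod_cast (by linarith : (k:ℤ) ≤ 2)
  interval_cases k
  · norm_num at h1
  · norm_num at key
    omega
end

section
/- For every positive integer k, the rational number k·(8 + (64k⁴ + 4880k³ + 960k² − 160k − 32)/(5k+1)⁴) is not an integer. -/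
set_option maxRecDepth 4000


theorem stmt_16 (k : ℕ) (hk : 1 ≤ k) :
    ¬ ∃ m : ℤ, (k * (8 + (64 * k^4 + 4880 * k^3 + 960 * k^2 - 160 * k - 32)
        / (5 * k + 1)^4) : ℚ) = m := by
  rintro ⟨m, hm⟩
  have hd0 : ((5 * (k:ℚ) + 1)^4) ≠ 0 := by positivity
  -- clear denominators
  have heq : (k : ℚ) * (8 * (5 * k + 1)^4 + (64 * k^4 + 4880 * k^3 + 960 * k^2 - 160 * k - 32))
      = m * (5 * k + 1)^4 := by
    field_simp at hm
    linear_combination hm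
  have heqZ : (k:ℤ) * (8 * (5 * (k:ℤ) + 1)^4 +
      (64 * (k:ℤ)^4 + 4880 * (k:ℤ)^3 + 960 * (k:ℤ)^2 - 160 * (k:ℤ) - 32))
      = m * (5 * (k:ℤ) + 1)^4 := by
    have : ((((k:ℤ) * (8 * (5 * (k:ℤ) + 1)^4 +
        (64 * (k:ℤ)^4 + 4880 * (k:ℤ)^3 + 960 * (k:ℤ)^2 - 160 * (k:ℤ) - 32))) : ℤ) : ℚ)
        = ((m * (5 * (k:ℤ) + 1)^4 : ℤ) : ℚ) := by
      push_cast
      linear_combination heq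
    exact_mod_cast this
  set K : ℤ := (k : ℤ) with hK
  set N : ℤ := 64 * K^4 + 4880 * K^3 + 960 * K^2 - 160 * K - 32 with hN
  have hdvd4 : (5 * K + 1)^4 ∣ N * K := ⟨m - 8 * K, by linear_combination heqZ⟩
  have hc1 : IsCoprime (5 * K + 1) K := ⟨1, -5, by ring⟩
  have hdvdN4 : (5 * K + 1)^4 ∣ N := (hc1.pow_left).dvd_of_dvd_mul_right hdvd4
  have hdvdN2 : (5 * K + 1)^2 ∣ N := dvd_trans (pow_dvd_pow _ (by norm_num)) hdvdN4
  have hdvdN1 : (5 * K + 1) ∣ N := dvd_trans (dvd_pow_self _ (by norm_num)) hdvdN2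
  have h336 : (5 * K + 1) ∣ 336 := by
    have h : (336 : ℤ) = (64 * (5*K+1)^3 + 24144 * (5*K+1)^2 - 48816 * (5*K+1) + 4944)
        * (5 * K + 1) - 625 * N := by rw [hN]; ring
    rw [h]
    exact dvd_sub (dvd_mul_left _ _) (hdvdN1.mul_left 625)
  have hle : 5 * K + 1 ≤ 336 := Int.le_of_dvd (by norm_num) h336
  have hKk : K = (k : ℤ) := hK
  have hk67 : k ≤ 67 := by omega
  rw [hN, hK] at hdvdN2
  clear_value K N
  clear heq heqZ hdvd4 hc1 hdvdN4 hdvdN1 h336 hle hm hd0 hN hK hKk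
  interval_cases k <;> norm_num at hdvdN2
end

section
/- For every positive integer k, the rational number 24(211k⁵ + 579k⁴ + 238k³ + 6k² − 9k − 1)/(5k+1)⁴ is not an integer. -/
theorem stmt_17 (k : ℕ) (hk : 1 ≤ k) :
    ¬ ∃ m : ℤ, (24 * (211 * k^5 + 579 * k^4 + 238 * k^3 + 6 * k^2 - 9 * k - 1)
        / (5 * k + 1)^4 : ℚ) = m := by
  rintro ⟨m, hm⟩
  have hne : ((5 * k + 1 : ℚ))^4 ≠ 0 := by positivity
  rw [div_eq_iff hne] at hm
  have key : (24 * (211 * (k:ℤ)^5 + 579 * k^4 + 238 * k^3 + 6 * k^2 - 9 * k - 1))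
      = m * (5 * k + 1)^4 := by exact_mod_cast hm
  have h1 : (5*(k:ℤ)+1) ∣ 3125 * (24 * (211 * (k:ℤ)^5 + 579 * k^4 + 238 * k^3 + 6 * k^2 - 9 * k - 1)) + 384 :=
    ⟨3165000*(k:ℤ)^4 + 8052000*k^3 + 1959600*k^2 - 301920*k - 74616, by ring⟩
  have h2 : (5*(k:ℤ)+1) ∣ 3125 * (24 * (211 * (k:ℤ)^5 + 579 * k^4 + 238 * k^3 + 6 * k^2 - 9 * k - 1)) :=
    ⟨3125 * m * (5*(k:ℤ)+1)^3, by linear_combination 3125 * key⟩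
  have hd : (5*(k:ℤ)+1) ∣ 384 := by
    have := dvd_sub h1 h2
    simpa using this
  have hle : (5*(k:ℤ)+1) ≤ 384 := Int.le_of_dvd (by norm_num) hd
  have hk76 : k ≤ 76 := by exact_mod_cast by omega
  have h4 : ((5*(k:ℤ)+1))^4 ∣ 24 * (211 * (k:ℤ)^5 + 579 * k^4 + 238 * k^3 + 6 * k^2 - 9 * k - 1) := ⟨m, by linear_combination key⟩
  interval_cases k <;> omega
end

section
/- For every positive integer k, the rational number 24(211k⁵ + 777k⁴ + 784k³ + 328k² + 60k + 4)/(5k+2)⁴ is not an integer. -/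
lemma aux_div_2592 (k : ℕ) (hk : 1 ≤ k) (h5 : (5 * k + 2) ∣ 2592) :
    k = 2 ∨ k = 5 ∨ k = 6 ∨ k = 14 ∨ k = 32 ∨ k = 86 ∨ k = 518 := by
  obtain ⟨e, he⟩ := h5
  have he1 : e ≤ 370 := by nlinarith
  have he0 : 1 ≤ e := by nlinarith
  interval_cases e <;> omega

theorem stmt_18 (k : ℕ) (hk : 1 ≤ k) :
    ¬ ∃ m : ℤ, (24 * (211 * k^5 + 777 * k^4 + 784 * k^3 + 328 * k^2 + 60 * k + 4)
        / (5 * k + 2)^4 : ℚ) = m := by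
  rintro ⟨m, hm⟩
  have hne : ((5 * k + 2 : ℚ))^4 ≠ 0 := by positivity
  rw [div_eq_iff hne] at hm
  set n : ℤ := (k : ℤ) with hn
  have hZ : 24 * (211 * n^5 + 777 * n^4 + 784 * n^3 + 328 * n^2 + 60 * n + 4)
      = m * (5 * n + 2)^4 := by exact_mod_cast hm
  have h1 : (5 * n + 2) ∣ 24 * (211 * n^5 + 777 * n^4 + 784 * n^3 + 328 * n^2 + 60 * n + 4) :=
    ⟨m * (5 * n + 2)^3, by rw [hZ]; ring⟩
  have h2 : (5 * n + 2) ∣ (2592 : ℤ) := by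
    have h3 : (5 * n + 2) ∣
        3125 * (24 * (211 * n^5 + 777 * n^4 + 784 * n^3 + 328 * n^2 + 60 * n + 4)) :=
      h1.mul_left 3125
    have h4 : (2592 : ℤ) =
        3125 * (24 * (211 * n^5 + 777 * n^4 + 784 * n^3 + 328 * n^2 + 60 * n + 4))
        - (5 * n + 2) * (5064 * (5 * n + 2)^4 + 42600 * (5 * n + 2)^3 - 72960 * (5 * n + 2)^2
          - 5760 * (5 * n + 2) + 30240) := by ring
    rw [h4]
    exact dvd_sub h3 (Dvd.intro _ rfl)
  have h5 : (5 * k + 2) ∣ 2592 := by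
    have : ((5 * k + 2 : ℕ) : ℤ) ∣ ((2592 : ℕ) : ℤ) := by push_cast; exact h2
    exact_mod_cast this
  rcases aux_div_2592 k hk h5 with rfl | rfl | rfl | rfl | rfl | rfl | rfl <;>
    (norm_num [hn] at hZ; omega)
end

section
/- For every positive integer k, the rational number 24(211k⁵ + 903k⁴ + 1286k³ + 822k² + 243k + 27)/(5k+3)⁴ is not an integer. -/
theorem stmt_19 (k : ℕ) (hk : 1 ≤ k) :
    ¬ ∃ m : ℤ, (24 * (211 * k^5 + 903 * k^4 + 1286 * k^3 + 822 * k^2 + 243 * k + 27)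
        / (5 * k + 3)^4 : ℚ) = m := by
  rintro ⟨m, hm⟩
  have hne : ((5 * k + 3 : ℚ))^4 ≠ 0 := by positivity
  rw [div_eq_iff hne] at hm
  have hz : (24 * (211 * (k:ℤ)^5 + 903 * k^4 + 1286 * k^3 + 822 * k^2 + 243 * k + 27))
      = m * (5 * (k:ℤ) + 3)^4 := by exact_mod_cast hm
  clear hm hne
  have hdvd : (5 * (k:ℤ) + 3) ∣ 2592 := by
    refine ⟨(5064 * (5 * (k:ℤ) + 3) + 32400) * (5 * (k:ℤ) + 3)^3
      - 72960 * (5 * (k:ℤ) + 3)^2 + 5760 * (5 * (k:ℤ) + 3) + 30240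
      - 3125 * m * (5 * (k:ℤ) + 3)^3, ?_⟩
    linear_combination (-3125 : ℤ) * hz
  have hle : (5 * (k:ℤ) + 3) ≤ 2592 := Int.le_of_dvd (by norm_num) hdvd
  have hk' : k ≤ 517 := by omega
  interval_cases k <;> omega
end
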